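/- Let f : B → A be a homomorphism of commutative rings, M an A-module, and θ : M ⊗[B] A → A ⊗[B] M an additive map that is linear over A ⊗[B] A and satisfies the cocycle condition (id_A ⊗ θ) ∘ (θ ⊗ id_A) = θ₁₃. Then the unit condition — namely, that the composite M → M ⊗[B] A → A ⊗[B] M → M given by m ↦ m ⊗ 1, then θ, then a ⊗ m ↦ a • m, equals the identity of M — holds if and only if θ is bijective. -/

import Mathlib

open CategoryTheory TensorProduct

namespace ModuleDescent

noncomputable section

universe u

variable {B A : Type u} [CommRing B] [CommRing A] (f : B →+* A)

/-- The `B`-module obtained from an `A`-module by restriction of scalars along `f`. -/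
abbrev res (M : ModuleCat.{u} A) : ModuleCat.{u} B := (ModuleCat.restrictScalars f).obj M

/-- `A` as a `B`-module via `f`. -/
abbrev resA : ModuleCat.{u} B := res f (ModuleCat.of A A)

/-- Scalar multiplication by `a : A` as a `B`-linear endomorphism of (the restriction of
scalars of) an `A`-module `M`. -/
def smulHom (M : ModuleCat.{u} A) (a : A) : ↥(res f M) →ₗ[B] ↥(res f M) where
  toFun m := (a • m : ↥M)
  map_add' := smul_add a
  map_smul' b m := by
    show a • (f b • m : ↥M) = f b • (a • m : ↥M)
    rw [← mul_smul, mul_comm, mul_smul]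

/-- The identity function from `A` (as a `B`-module via `f`) to `A`. -/
def toA (x : ↥(resA f)) : A := x

/-- Left multiplication by `a' : A` as a `B`-linear endomorphism of `A`. -/
def mulHom (a' : A) : ↥(resA f) →ₗ[B] ↥(resA f) where
  toFun x := (a' * toA f x : A)
  map_add' x y := by
    show (a' * (toA f x + toA f y) : A) = a' * toA f x + a' * toA f y
    ring
  map_smul' b x := by
    show (a' * (f b * toA f x) : A) = f b * (a' * toA f x)
    ring

/-- The action of the pure tensor `a ⊗ a'` of `A ⊗[B] A` on `M ⊗[B] A`:
`(a ⊗ a') • (m ⊗ x) = (a • m) ⊗ (a' * x)`. -/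
def actL (M : ModuleCat.{u} A) (a a' : A) :
    ↥(res f M) ⊗[B] ↥(resA f) →ₗ[B] ↥(res f M) ⊗[B] ↥(resA f) :=
  TensorProduct.map (smulHom f M a) (mulHom f a')

/-- The action of the pure tensor `a ⊗ a'` of `A ⊗[B] A` on `A ⊗[B] M`:
`(a ⊗ a') • (x ⊗ m) = (a * x) ⊗ (a' • m)`. -/
def actR (M : ModuleCat.{u} A) (a a' : A) :
    ↥(resA f) ⊗[B] ↥(res f M) →ₗ[B] ↥(resA f) ⊗[B] ↥(res f M) :=
  TensorProduct.map (mulHom f a) (smulHom f M a')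

/-- The map `α` swapping the two `A`-factors of `M ⊗[B] A ⊗[B] A`. -/
def swapMAA (M : ModuleCat.{u} A) :
    (↥(res f M) ⊗[B] ↥(resA f)) ⊗[B] ↥(resA f) →ₗ[B]
      (↥(res f M) ⊗[B] ↥(resA f)) ⊗[B] ↥(resA f) :=
  (TensorProduct.assoc B _ _ _).symm.toLinearMap ∘ₗ
    (TensorProduct.congr (LinearEquiv.refl B ↥(res f M))
      (TensorProduct.comm B ↥(resA f) ↥(resA f))).toLinearMap ∘ₗ
        (TensorProduct.assoc B _ _ _).toLinearMap

/-- The map `β` swapping the last two factors of `A ⊗[B] M ⊗[B] A`. -/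
def swapAMA (M : ModuleCat.{u} A) :
    (↥(resA f) ⊗[B] ↥(res f M)) ⊗[B] ↥(resA f) →ₗ[B]
      (↥(resA f) ⊗[B] ↥(resA f)) ⊗[B] ↥(res f M) :=
  (TensorProduct.assoc B _ _ _).symm.toLinearMap ∘ₗ
    (TensorProduct.congr (LinearEquiv.refl B ↥(resA f))
      (TensorProduct.comm B ↥(res f M) ↥(resA f))).toLinearMap ∘ₗ
        (TensorProduct.assoc B _ _ _).toLinearMap

/-- The `B`-bilinear evaluation `a ↦ (m ↦ a • m)`. -/
def ev (M : ModuleCat.{u} A) : ↥(resA f) →ₗ[B] (↥(res f M) →ₗ[B] ↥(res f M)) where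
  toFun a := smulHom f M (toA f a)
  map_add' a a' := LinearMap.ext fun m => by
    show (toA f a + toA f a') • m = toA f a • m + toA f a' • m
    rw [add_smul]
  map_smul' b a := LinearMap.ext fun m => by
    show (f b * toA f a) • m = f b • ((toA f a • m : ↥M))
    rw [mul_smul]

/-- The action map `A ⊗[B] M → M`, `a ⊗ m ↦ a • m`. -/
def unitMap (M : ModuleCat.{u} A) :
    ↥(resA f) ⊗[B] ↥(res f M) →ₗ[B] ↥(res f M) :=
  TensorProduct.lift (ev f M)
section Aux
variable {B A : Type u} [CommRing B] [CommRing A] (f : B →+* A) (M : ModuleCat.{u} A)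

/-- Identity function `A → resA`. -/
def ofA (x : A) : ↥(resA f) := x

/-- Identity function `M → res M`. -/
def ofM (m : ↥M) : ↥(res f M) := m

lemma toA_ofA (x : A) : toA f (ofA f x) = x := rfl

lemma actR_tmul (a a' : A) (c : ↥(resA f)) (p : ↥(res f M)) :
    actR f M a a' (c ⊗ₜ[B] p) = ofA f (a * toA f c) ⊗ₜ[B] ofM f M (a' • p) := rfl

lemma actL_tmul (a a' : A) (p : ↥(res f M)) (c : ↥(resA f)) :
    actL f M a a' (p ⊗ₜ[B] c) = ofM f M (a • p) ⊗ₜ[B] ofA f (a' * toA f c) := rfl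

lemma unitMap_tmul (a : ↥(resA f)) (p : ↥(res f M)) :
    unitMap f M (a ⊗ₜ[B] p) = ofM f M (toA f a • p) := rfl

lemma smul_ofA (b : B) (x : A) : b • ofA f x = ofA f (f b * x) := rfl

lemma ofM_add (m m' : ↥M) : ofM f M (m + m') = ofM f M m + ofM f M m' := rfl

lemma smul_ofM (b : B) (m : ↥M) : b • ofM f M m = ofM f M (f b • m) := rfl

lemma actR_add_snd (a c c' : A) :
    actR f M a (c + c') = actR f M a c + actR f M a c' := by
  apply TensorProduct.ext'
  intro x p
  rw [LinearMap.add_apply, actR_tmul, actR_tmul, actR_tmul, ← tmul_add]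
  show _ = _ ⊗ₜ[B] ofM f M (c • p + c' • p)
  rw [← add_smul]

lemma actR_add_fst (a a' c : A) :
    actR f M (a + a') c = actR f M a c + actR f M a' c := by
  apply TensorProduct.ext'
  intro x p
  rw [LinearMap.add_apply, actR_tmul, actR_tmul, actR_tmul, ← add_tmul]
  show ofA f ((a + a') * toA f x) ⊗ₜ[B] _ = ofA f (a * toA f x + a' * toA f x) ⊗ₜ[B] _
  rw [add_mul]

lemma actR_smul_snd (b : B) (a c : A) :
    actR f M a (f b * c) = b • actR f M a c := by
  apply TensorProduct.ext'
  intro x p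
  rw [LinearMap.smul_apply, actR_tmul, actR_tmul]
  show ofA f (a * toA f x) ⊗ₜ[B] ofM f M ((f b * c) • p) = _
  rw [← tmul_smul]
  congr 1
  exact mul_smul (f b) c (show ↥M from p)

lemma actR_smul_fst (b : B) (a c : A) :
    actR f M (f b * a) c = b • actR f M a c := by
  apply TensorProduct.ext'
  intro x p
  rw [LinearMap.smul_apply, actR_tmul, actR_tmul]
  rw [mul_assoc, ← smul_ofA, ← smul_tmul']

/-- The map `m ↦ m ⊗ 1`. -/
def mk1 : ↥(res f M) →ₗ[B] ↥(res f M) ⊗[B] ↥(resA f) :=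
  (TensorProduct.mk B ↥(res f M) ↥(resA f)).flip (ofA f 1)

lemma mk1_apply (m : ↥(res f M)) : mk1 f M m = m ⊗ₜ[B] ofA f 1 := rfl

/-- The map `m ↦ 1 ⊗ m`. -/
def jMap : ↥(res f M) →ₗ[B] ↥(resA f) ⊗[B] ↥(res f M) :=
  TensorProduct.mk B ↥(resA f) ↥(res f M) (ofA f 1)

lemma jMap_apply (m : ↥(res f M)) : jMap f M m = ofA f 1 ⊗ₜ[B] m := rfl

/-- The map `m ⊗ x ↦ x • m`. -/
def prMap : ↥(res f M) ⊗[B] ↥(resA f) →ₗ[B] ↥(res f M) :=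
  unitMap f M ∘ₗ (TensorProduct.comm B ↥(res f M) ↥(resA f)).toLinearMap

lemma prMap_tmul (m : ↥(res f M)) (c : ↥(resA f)) :
    prMap f M (m ⊗ₜ[B] c) = ofM f M (toA f c • m) := rfl

/-- The contraction `a ⊗ (d ⊗ q) ↦ (a * d) ⊗ q`. -/
def nuMap :
    ↥(resA f) ⊗[B] (↥(resA f) ⊗[B] ↥(res f M)) →ₗ[B] ↥(resA f) ⊗[B] ↥(res f M) :=
  TensorProduct.lift
    { toFun := fun a => actR f M (toA f a) 1
      map_add' := fun a a' => actR_add_fst f M _ _ _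
      map_smul' := fun b a => by
        show actR f M (f b * toA f a) 1 = b • actR f M (toA f a) 1
        exact actR_smul_fst f M b _ _ }

lemma nuMap_tmul (a : ↥(resA f)) (w : ↥(resA f) ⊗[B] ↥(res f M)) :
    nuMap f M (a ⊗ₜ[B] w) = actR f M (toA f a) 1 w := rfl

/-- The contraction `c ⊗ (d ⊗ q) ↦ (a * d) ⊗ (c • q)`. -/
def gMap (a : A) :
    ↥(resA f) ⊗[B] (↥(resA f) ⊗[B] ↥(res f M)) →ₗ[B] ↥(resA f) ⊗[B] ↥(res f M) :=
  TensorProduct.lift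
    { toFun := fun c => actR f M a (toA f c)
      map_add' := fun c c' => actR_add_snd f M _ _ _
      map_smul' := fun b c => by
        show actR f M a (f b * toA f c) = b • actR f M a (toA f c)
        exact actR_smul_snd f M b _ _ }

lemma gMap_tmul (a : A) (c : ↥(resA f)) (w : ↥(resA f) ⊗[B] ↥(res f M)) :
    gMap f M a (c ⊗ₜ[B] w) = actR f M a (toA f c) w := rfl

/-- The contraction `c ⊗ v ↦ comm ((1 ⊗ c) • ((x ⊗ 1) • v))`. -/
def hMap (x : A) :
    ↥(resA f) ⊗[B] (↥(resA f) ⊗[B] ↥(res f M)) →ₗ[B] ↥(res f M) ⊗[B] ↥(resA f) :=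
  TensorProduct.lift
    { toFun := fun c => (TensorProduct.comm B ↥(resA f) ↥(res f M)).toLinearMap ∘ₗ
        actR f M 1 (toA f c) ∘ₗ actR f M x 1
      map_add' := fun c c' => by
        rw [show toA f (c + c') = toA f c + toA f c' from rfl, actR_add_snd f M 1 (toA f c) (toA f c'), LinearMap.add_comp,
          LinearMap.comp_add]
      map_smul' := fun b c => by
        show (TensorProduct.comm B ↥(resA f) ↥(res f M)).toLinearMap ∘ₗ
            actR f M 1 (f b * toA f c) ∘ₗ actR f M x 1 = _
        rw [actR_smul_snd f M b 1 (toA f c), LinearMap.smul_comp,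
          LinearMap.comp_smul]
        rfl }

lemma hMap_tmul (x : A) (c : ↥(resA f)) (w : ↥(resA f) ⊗[B] ↥(res f M)) :
    hMap f M x (c ⊗ₜ[B] w) =
      TensorProduct.comm B ↥(resA f) ↥(res f M)
        (actR f M 1 (toA f c) (actR f M x 1 w)) := rfl

end Aux

section Sigma
variable {B A : Type u} [CommRing B] [CommRing A] (f : B →+* A) (M : ModuleCat.{u} A)
  (θ : ↥(res f M) ⊗[B] ↥(resA f) →ₗ[B] ↥(resA f) ⊗[B] ↥(res f M))

/-- The map `m ↦ θ (m ⊗ 1)`. -/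
def etaMap : ↥(res f M) →ₗ[B] ↥(resA f) ⊗[B] ↥(res f M) := θ ∘ₗ mk1 f M

lemma etaMap_apply (m : ↥(res f M)) :
    etaMap f M θ m = θ (m ⊗ₜ[B] ofA f 1) := rfl

/-- The candidate inverse of `θ`: `a ⊗ m ↦ comm ((1 ⊗ a) • θ (m ⊗ 1))`. -/
def sigmaMap : ↥(resA f) ⊗[B] ↥(res f M) →ₗ[B] ↥(res f M) ⊗[B] ↥(resA f) :=
  TensorProduct.lift
    { toFun := fun a => (TensorProduct.comm B ↥(resA f) ↥(res f M)).toLinearMap ∘ₗ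
        actR f M 1 (toA f a) ∘ₗ etaMap f M θ
      map_add' := fun a a' => by
        rw [show toA f (a + a') = toA f a + toA f a' from rfl, actR_add_snd f M 1 (toA f a) (toA f a'), LinearMap.add_comp,
          LinearMap.comp_add]
      map_smul' := fun b a => by
        show (TensorProduct.comm B ↥(resA f) ↥(res f M)).toLinearMap ∘ₗ
            actR f M 1 (f b * toA f a) ∘ₗ etaMap f M θ = _
        rw [actR_smul_snd f M b 1 (toA f a), LinearMap.smul_comp,
          LinearMap.comp_smul]
        rfl }

lemma sigmaMap_tmul (a : ↥(resA f)) (n : ↥(res f M)) :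
    sigmaMap f M θ (a ⊗ₜ[B] n) =
      TensorProduct.comm B ↥(resA f) ↥(res f M)
        (actR f M 1 (toA f a) (θ (n ⊗ₜ[B] ofA f 1))) := rfl

end Sigma
section Test
variable {B A : Type u} [CommRing B] [CommRing A] (f : B →+* A) (M : ModuleCat.{u} A)

lemma swapMAA_tmul (m : ↥(res f M)) (x y : ↥(resA f)) :
    swapMAA f M ((m ⊗ₜ[B] x) ⊗ₜ[B] y) = (m ⊗ₜ[B] y) ⊗ₜ[B] x := by
  simp [swapMAA]

lemma swapAMA_tmul (c : ↥(resA f)) (p : ↥(res f M)) (x : ↥(resA f)) :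
    swapAMA f M ((c ⊗ₜ[B] p) ⊗ₜ[B] x) = (c ⊗ₜ[B] x) ⊗ₜ[B] p := by
  simp [swapAMA]

variable (θ : ↥(res f M) ⊗[B] ↥(resA f) →ₗ[B] ↥(resA f) ⊗[B] ↥(res f M))
variable (hlin : ∀ (a a' : A) (z : ↥(res f M) ⊗[B] ↥(resA f)),
      θ (actL f M a a' z) = actR f M a a' (θ z))

include hlin in
lemma eta_smul (x : A) (p : ↥(res f M)) :
    etaMap f M θ (ofM f M (x • p)) = actR f M x 1 (etaMap f M θ p) := by
  have h := hlin x 1 (p ⊗ₜ[B] ofA f 1)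
  rw [actL_tmul] at h
  simp only [toA_ofA, mul_one] at h
  exact h

include hlin in
lemma theta_tmul (m : ↥(res f M)) (x : ↥(resA f)) :
    θ (m ⊗ₜ[B] x) = actR f M 1 (toA f x) (etaMap f M θ m) := by
  have h := hlin 1 (toA f x) (m ⊗ₜ[B] ofA f 1)
  rw [actL_tmul] at h
  simp only [toA_ofA, mul_one, one_smul] at h
  exact h

-- S1
lemma s1 (w : ↥(resA f) ⊗[B] ↥(res f M)) :
    (TensorProduct.assoc B ↥(resA f) ↥(resA f) ↥(res f M))
        (swapAMA f M (w ⊗ₜ[B] ofA f 1)) =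
      (jMap f M).lTensor ↥(resA f) w := by
  induction w with
  | zero => simp
  | tmul c p => rw [swapAMA_tmul]; simp [jMap_apply]
  | add w₁ w₂ ih₁ ih₂ => rw [add_tmul, map_add, map_add, ih₁, ih₂, map_add]

-- S2
lemma s2 (w : ↥(resA f) ⊗[B] ↥(res f M)) :
    θ.lTensor ↥(resA f)
        ((TensorProduct.assoc B ↥(resA f) ↥(res f M) ↥(resA f)) (w ⊗ₜ[B] ofA f 1)) =
      (etaMap f M θ).lTensor ↥(resA f) w := by
  induction w with
  | zero => simp
  | tmul c p => simp [etaMap_apply, mk1_apply]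
  | add w₁ w₂ ih₁ ih₂ => rw [add_tmul, map_add, map_add, ih₁, ih₂, map_add]

variable (hcoc :
      (TensorProduct.assoc B ↥(resA f) ↥(resA f) ↥(res f M)).toLinearMap ∘ₗ
          (swapAMA f M ∘ₗ θ.rTensor ↥(resA f) ∘ₗ swapMAA f M) =
        θ.lTensor ↥(resA f) ∘ₗ
          (TensorProduct.assoc B ↥(resA f) ↥(res f M) ↥(resA f)).toLinearMap ∘ₗ
            θ.rTensor ↥(resA f))

include hcoc in
lemma key (m : ↥(res f M)) :
    (jMap f M).lTensor ↥(resA f) (etaMap f M θ m) =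
      (etaMap f M θ).lTensor ↥(resA f) (etaMap f M θ m) := by
  have h := congrArg (fun g => g ((m ⊗ₜ[B] ofA f 1) ⊗ₜ[B] ofA f 1)) hcoc
  simp only [LinearMap.coe_comp, Function.comp_apply, LinearEquiv.coe_coe] at h
  rw [swapMAA_tmul] at h
  rw [LinearMap.rTensor_tmul] at h
  rw [s1, s2] at h
  exact h

-- L2
lemma nu_j (w : ↥(resA f) ⊗[B] ↥(res f M)) :
    nuMap f M ((jMap f M).lTensor ↥(resA f) w) = w := by
  induction w with
  | zero => simp
  | tmul c p =>
      rw [LinearMap.lTensor_tmul, jMap_apply, nuMap_tmul, actR_tmul]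
      show ofA f (toA f c * 1) ⊗ₜ[B] ofM f M ((1:A) • p) = _
      rw [mul_one, one_smul]
      rfl
  | add w₁ w₂ ih₁ ih₂ => rw [map_add, map_add, ih₁, ih₂]

-- L3
include hlin in
lemma nu_eta (w : ↥(resA f) ⊗[B] ↥(res f M)) :
    nuMap f M ((etaMap f M θ).lTensor ↥(resA f) w) =
      etaMap f M θ (unitMap f M w) := by
  induction w with
  | zero => simp
  | tmul c p =>
      rw [LinearMap.lTensor_tmul, nuMap_tmul, unitMap_tmul]
      rw [← eta_smul f M θ hlin (toA f c) p]
  | add w₁ w₂ ih₁ ih₂ => rw [map_add, map_add, ih₁, ih₂, map_add, map_add]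

include hlin in
lemma f1 (a : A) (w : ↥(resA f) ⊗[B] ↥(res f M)) :
    θ (TensorProduct.comm B ↥(resA f) ↥(res f M) (actR f M 1 a w)) =
      gMap f M a ((etaMap f M θ).lTensor ↥(resA f) w) := by
  induction w with
  | zero => simp
  | tmul c p =>
      rw [actR_tmul, comm_tmul, LinearMap.lTensor_tmul, gMap_tmul]
      have h := hlin a (toA f c) (p ⊗ₜ[B] ofA f 1)
      rw [actL_tmul] at h
      simp only [toA_ofA, mul_one, one_mul] at h ⊢
      exact h
  | add w₁ w₂ ih₁ ih₂ => simp only [map_add, ih₁, ih₂]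

lemma f2 (a : A) (w : ↥(resA f) ⊗[B] ↥(res f M)) :
    gMap f M a ((jMap f M).lTensor ↥(resA f) w) =
      ofA f a ⊗ₜ[B] ofM f M (unitMap f M w) := by
  induction w with
  | zero => simp [ofM]
  | tmul c p =>
      rw [LinearMap.lTensor_tmul, jMap_apply, gMap_tmul, actR_tmul, unitMap_tmul]
      simp only [toA_ofA, mul_one]
      rfl
  | add w₁ w₂ ih₁ ih₂ => simp only [map_add, ih₁, ih₂, ofM_add, tmul_add]; exact (tmul_add _ _ _).symm

include hlin in
lemma f3 (x : A) (w : ↥(resA f) ⊗[B] ↥(res f M)) :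
    sigmaMap f M θ (actR f M 1 x w) = hMap f M x ((etaMap f M θ).lTensor ↥(resA f) w) := by
  induction w with
  | zero => simp
  | tmul c p =>
      rw [actR_tmul, sigmaMap_tmul, LinearMap.lTensor_tmul, hMap_tmul]
      rw [← etaMap_apply, eta_smul f M θ hlin]
      simp only [toA_ofA, one_mul]
  | add w₁ w₂ ih₁ ih₂ => rw [map_add, map_add, map_add, ih₁, ih₂, map_add]

lemma f4 (x : A) (w : ↥(resA f) ⊗[B] ↥(res f M)) :
    hMap f M x ((jMap f M).lTensor ↥(resA f) w) =
      ofM f M (unitMap f M w) ⊗ₜ[B] ofA f x := by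
  induction w with
  | zero => simp [ofM]
  | tmul c p =>
      rw [LinearMap.lTensor_tmul, jMap_apply, hMap_tmul, actR_tmul, actR_tmul,
        comm_tmul, unitMap_tmul]
      simp only [toA_ofA, mul_one, one_mul, one_smul]
      rfl
  | add w₁ w₂ ih₁ ih₂ => simp only [map_add, ih₁, ih₂, ofM_add, add_tmul]; exact (add_tmul _ _ _).symm

end Test
/-- Let `f : B → A` be a homomorphism of commutative rings, `M` an `A`-module, and
`θ : M ⊗[B] A → A ⊗[B] M` an additive map that is linear over `A ⊗[B] A` (equivalently:
additive, `B`-linear, and compatible with the action of the pure tensors of `A ⊗[B] A`)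
and satisfies the cocycle condition `(id_A ⊗ θ) ∘ (θ ⊗ id_A) = θ₁₃`.  Then the unit
condition — the composite `M → M ⊗[B] A → A ⊗[B] M → M`, `m ↦ m ⊗ 1`, then `θ`, then
`a ⊗ m ↦ a • m`, is the identity of `M` — holds if and only if `θ` is bijective. -/
theorem unit_iff_bijective (M : ModuleCat.{u} A)
    (θ : ↥(res f M) ⊗[B] ↥(resA f) →ₗ[B] ↥(resA f) ⊗[B] ↥(res f M))
    (hlin : ∀ (a a' : A) (z : ↥(res f M) ⊗[B] ↥(resA f)),
      θ (actL f M a a' z) = actR f M a a' (θ z))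
    (hcoc :
      (TensorProduct.assoc B ↥(resA f) ↥(resA f) ↥(res f M)).toLinearMap ∘ₗ
          (swapAMA f M ∘ₗ θ.rTensor ↥(resA f) ∘ₗ swapMAA f M) =
        θ.lTensor ↥(resA f) ∘ₗ
          (TensorProduct.assoc B ↥(resA f) ↥(res f M) ↥(resA f)).toLinearMap ∘ₗ
            θ.rTensor ↥(resA f)) :
    (∀ m : ↥M, unitMap f M (θ ((m : ↥(res f M)) ⊗ₜ[B] ((1 : A) : ↥(resA f)))) = m) ↔
      Function.Bijective θ := by
  constructor
  · intro hu
    have hu' : ∀ n : ↥(res f M), unitMap f M (θ (n ⊗ₜ[B] ofA f 1)) = n := hu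
    have hθσ : ∀ z, θ (sigmaMap f M θ z) = z := by
      intro z
      induction z with
      | zero => simp
      | tmul a n =>
          rw [sigmaMap_tmul, f1 f M θ hlin (toA f a) (θ (n ⊗ₜ[B] ofA f 1)),
            ← etaMap_apply, ← key f M θ hcoc n, f2]
          simp only [etaMap_apply]
          rw [hu']
          rfl
      | add z₁ z₂ ih₁ ih₂ => simp only [map_add, ih₁, ih₂]
    have hσθ : ∀ z, sigmaMap f M θ (θ z) = z := by
      intro z
      induction z with
      | zero => simp
      | tmul m x =>
          rw [theta_tmul f M θ hlin m x, f3 f M θ hlin (toA f x) (etaMap f M θ m),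
            ← key f M θ hcoc m, f4]
          simp only [etaMap_apply]
          rw [hu']
          rfl
      | add z₁ z₂ ih₁ ih₂ => simp only [map_add, ih₁, ih₂]
    exact Function.bijective_iff_has_inverse.mpr ⟨sigmaMap f M θ, hσθ, hθσ⟩
  · intro hbij m
    have h2 : etaMap f M θ m = etaMap f M θ (unitMap f M (etaMap f M θ m)) := by
      conv_lhs => rw [← nu_j f M (etaMap f M θ m)]
      rw [key f M θ hcoc m, nu_eta f M θ hlin]
    have h3 : ((m : ↥(res f M)) ⊗ₜ[B] ofA f 1 :
        ↥(res f M) ⊗[B] ↥(resA f)) =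
        (unitMap f M (etaMap f M θ m)) ⊗ₜ[B] ofA f 1 := hbij.injective h2
    have h4 := congrArg (prMap f M) h3
    rw [prMap_tmul] at h4
    erw [prMap_tmul] at h4
    simp only [toA_ofA, one_smul] at h4
    exact h4.symm.trans (congrArg (ofM f M) (one_smul A (show ↥M from m)))

end
end ModuleDescent
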